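/- arXiv:2510.02910 — 2 statements merged into one kernel-verified Lean document; each statement's English description precedes it below -/
import Mathlib

section
/- Let w : [0, T] → ℝ be differentiable with 0 < w(0) < w_∞ and w′(t) = c(t) · (1 − (w(t)/w_∞)^ν) for all t ∈ [0, T]. Then w is nondecreasing on [0, T] and satisfies 0 < w(t) < w_∞ for every t ∈ [0, T]; that is, the weight never exceeds the asymptotic weight w_∞ and grows monotonically when the effective growth coefficient is nonnegative. -/
/-- Key elementary inequality: for `x ∈ [1/2, 1]` and `ν > 0`, `1 - x ^ ν ≤ 2ν(1 - x)`. -/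
lemma one_sub_rpow_le_aux (ν : ℝ) (hν : 0 < ν) {x : ℝ} (h1 : 1/2 ≤ x) (h2 : x ≤ 1) :
    1 - x ^ ν ≤ 2 * ν * (1 - x) := by
  have hx0 : (0:ℝ) < x := lt_of_lt_of_le (by norm_num) h1
  have hlog : -(2 * (1 - x)) ≤ Real.log x := by
    have h := Real.one_sub_inv_le_log_of_pos hx0
    have hxinv : x⁻¹ ≤ 2 := by
      rw [inv_le_comm₀ hx0 (by norm_num)]
      linarith
    nlinarith [mul_inv_cancel₀ (ne_of_gt hx0),
      mul_nonneg (by linarith : (0:ℝ) ≤ 2*x-1) (by linarith : (0:ℝ) ≤ 1-x)]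
  have hpow : x ^ ν = Real.exp (Real.log x * ν) := Real.rpow_def_of_pos hx0 ν
  have hexp : Real.log x * ν + 1 ≤ Real.exp (Real.log x * ν) := Real.add_one_le_exp _
  have hmul : -(2 * (1 - x)) * ν ≤ Real.log x * ν := mul_le_mul_of_nonneg_right hlog hν.le
  rw [hpow]
  nlinarith

/-- Let `c` be continuous and nonnegative on `[0, T]` and let `w` satisfy
`w′(t) = c(t)(1 - (w(t)/winf)^ν)` on `[0, T]` with `0 < w(0) < winf`.  Then `w` is
nondecreasing on `[0, T]` and `0 < w(t) < winf` for every `t ∈ [0, T]`: the weight grows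
monotonically and never exceeds the asymptotic weight `winf`. -/
theorem weight_monotone_and_bounded
    (winf ν T : ℝ) (hwinf : 0 < winf) (hν : 0 < ν) (hT : 0 < T)
    (c : ℝ → ℝ)
    (hc : ContinuousOn c (Set.Icc (0 : ℝ) T))
    (hcpos : ∀ t ∈ Set.Icc (0 : ℝ) T, 0 ≤ c t)
    (w : ℝ → ℝ)
    (hw0 : 0 < w 0) (hw0' : w 0 < winf)
    (hderiv : ∀ t ∈ Set.Icc (0 : ℝ) T,
      HasDerivWithinAt w (c t * (1 - (w t / winf) ^ ν)) (Set.Icc (0 : ℝ) T) t) :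
    MonotoneOn w (Set.Icc (0 : ℝ) T) ∧
      ∀ t ∈ Set.Icc (0 : ℝ) T, 0 < w t ∧ w t < winf := by
  have h0I : (0:ℝ) ∈ Set.Icc (0:ℝ) T := ⟨le_refl 0, hT.le⟩
  have hwc : ContinuousOn w (Set.Icc (0:ℝ) T) := fun t ht => (hderiv t ht).continuousWithinAt
  -- bound on c
  obtain ⟨tmax, htmaxI, htmax⟩ := isCompact_Icc.exists_isMaxOn ⟨0, h0I⟩ hc
  set C : ℝ := c tmax with hCdef
  have hC : ∀ t ∈ Set.Icc (0:ℝ) T, c t ≤ C := fun t ht => htmax ht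
  have hC0 : 0 ≤ C := hcpos tmax htmaxI
  -- main claim: 0 < w t < winf on I
  have key : ∀ t ∈ Set.Icc (0:ℝ) T, 0 < w t ∧ w t < winf := by
    by_contra hcon
    push_neg at hcon
    set S : Set ℝ := {t | t ∈ Set.Icc (0:ℝ) T ∧ (w t ≤ 0 ∨ winf ≤ w t)} with hSdef
    have hSne : S.Nonempty := by
      obtain ⟨t, ht, h⟩ := hcon
      refine ⟨t, ht, ?_⟩
      by_cases h0 : 0 < w t
      · exact Or.inr (h h0)
      · exact Or.inl (le_of_not_gt h0)
    have hSclosed : IsClosed S := by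
      have hSeq : S = Set.Icc (0:ℝ) T ∩ w ⁻¹' (Set.Iic 0 ∪ Set.Ici winf) := by
        ext t; simp [hSdef, Set.mem_preimage]
      rw [hSeq]
      exact ContinuousOn.preimage_isClosed_of_isClosed hwc isClosed_Icc
        ((isClosed_Iic).union isClosed_Ici)
    have hSbdd : BddBelow S := ⟨0, fun t ht => ht.1.1⟩
    set t₀ : ℝ := sInf S with ht₀def
    have ht₀S : t₀ ∈ S := hSclosed.csInf_mem hSne hSbdd
    have ht₀I : t₀ ∈ Set.Icc (0:ℝ) T := ht₀S.1
    have hbelow : ∀ t ∈ Set.Icc (0:ℝ) T, t < t₀ → 0 < w t ∧ w t < winf := by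
      intro t ht htlt
      by_contra h
      have htS : t ∈ S := by
        refine ⟨ht, ?_⟩
        push_neg at h
        by_cases h0 : 0 < w t
        · exact Or.inr (h h0)
        · exact Or.inl (le_of_not_gt h0)
      exact absurd (csInf_le hSbdd htS) (not_le.mpr htlt)
    have ht₀pos : 0 < t₀ := by
      rcases lt_or_eq_of_le ht₀I.1 with h | h
      · exact h
      · exfalso
        rcases ht₀S.2 with h' | h' <;> rw [← h] at h' <;> linarith
    -- monotone below t₀, so w 0 ≤ w s for s < t₀
    have hmono_below : ∀ s ∈ Set.Icc (0:ℝ) T, s < t₀ → w 0 ≤ w s := by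
      intro s hs hst
      have hsub : Set.Icc (0:ℝ) s ⊆ Set.Icc (0:ℝ) T := Set.Icc_subset_Icc le_rfl hs.2
      have hmono : MonotoneOn w (Set.Icc (0:ℝ) s) := by
        apply monotoneOn_of_hasDerivWithinAt_nonneg (convex_Icc 0 s) (hwc.mono hsub)
          (f' := fun t => c t * (1 - (w t / winf) ^ ν))
        · intro t ht
          rw [interior_Icc] at ht ⊢
          exact (hderiv t (hsub (Set.Ioo_subset_Icc_self ht))).mono
            ((Set.Ioo_subset_Icc_self).trans hsub)
        · intro t ht
          rw [interior_Icc] at ht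
          have htI : t ∈ Set.Icc (0:ℝ) T := hsub (Set.Ioo_subset_Icc_self ht)
          have htlt : t < t₀ := lt_of_le_of_lt ht.2.le hst
          obtain ⟨hpos, hlt⟩ := hbelow t htI htlt
          have hx0 : 0 ≤ w t / winf := div_nonneg hpos.le hwinf.le
          have hx1 : w t / winf ≤ 1 := (div_le_one hwinf).mpr hlt.le
          have h1 := Real.rpow_le_one hx0 hx1 hν.le
          have h2 := hcpos t htI
          nlinarith
      exact hmono ⟨le_refl 0, hs.1⟩ ⟨hs.1, le_refl s⟩ hs.1
    -- limit at t₀ from the left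
    have hclosIco : t₀ ∈ closure (Set.Ico 0 t₀) := by
      rw [closure_Ico (ne_of_lt ht₀pos)]
      exact ⟨ht₀pos.le, le_refl t₀⟩
    have hne : (nhdsWithin t₀ (Set.Ico 0 t₀)).NeBot :=
      mem_closure_iff_nhdsWithin_neBot.mp hclosIco
    have hIcoI : Set.Ico 0 t₀ ⊆ Set.Icc (0:ℝ) T := fun s hs => ⟨hs.1, le_trans hs.2.le ht₀I.2⟩
    have htend : Filter.Tendsto w (nhdsWithin t₀ (Set.Ico 0 t₀)) (nhds (w t₀)) :=
      (hwc t₀ ht₀I).mono hIcoI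
    have hw_t₀_ge : w 0 ≤ w t₀ := by
      refine ge_of_tendsto htend ?_
      filter_upwards [self_mem_nhdsWithin] with s hs
      exact hmono_below s (hIcoI hs) hs.2
    have hw_t₀_le : w t₀ ≤ winf := by
      refine le_of_tendsto htend ?_
      filter_upwards [self_mem_nhdsWithin] with s hs
      exact (hbelow s (hIcoI hs) hs.2).2.le
    have hw_t₀ : w t₀ = winf := by
      rcases ht₀S.2 with h' | h'
      · linarith
      · linarith
    -- choose a < t₀ with w ≥ winf/2 on [a, t₀]
    obtain ⟨δ, hδ, hδ'⟩ := Metric.continuousWithinAt_iff.mp (hwc t₀ ht₀I) (winf/2) (by linarith)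
    set a : ℝ := max 0 (t₀ - δ/2) with hadef
    have ha0 : 0 ≤ a := le_max_left _ _
    have halt : a < t₀ := max_lt ht₀pos (by linarith)
    have haI : a ∈ Set.Icc (0:ℝ) T := ⟨ha0, le_trans halt.le ht₀I.2⟩
    have hsubI : Set.Icc a t₀ ⊆ Set.Icc (0:ℝ) T :=
      Set.Icc_subset_Icc ha0 ht₀I.2
    have hhalf : ∀ t ∈ Set.Icc a t₀, winf/2 ≤ w t := by
      intro t ht
      have htI : t ∈ Set.Icc (0:ℝ) T := hsubI ht
      have hdist : dist t t₀ < δ := by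
        rw [Real.dist_eq, abs_of_nonpos (by linarith [ht.2])]
        have : t₀ - δ/2 ≤ a := le_max_right _ _
        have := ht.1
        linarith
      have := hδ' htI hdist
      rw [Real.dist_eq] at this
      have := abs_lt.mp this
      rw [hw_t₀] at this
      linarith [this.1]
    have hle : ∀ t ∈ Set.Icc a t₀, w t ≤ winf := by
      intro t ht
      rcases lt_or_eq_of_le ht.2 with h | h
      · exact (hbelow t (hsubI ht) h).2.le
      · rw [h, hw_t₀]
    -- the barrier function g
    set K : ℝ := 2 * ν * C / winf with hKdef
    set g : ℝ → ℝ := fun t => (winf - w t) * Real.exp (K * t) with hgdef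
    have hgderiv : ∀ t ∈ interior (Set.Icc a t₀),
        HasDerivWithinAt g
          ((K * (winf - w t) - c t * (1 - (w t / winf) ^ ν)) * Real.exp (K * t))
          (interior (Set.Icc a t₀)) t := by
      intro t ht
      rw [interior_Icc] at ht ⊢
      have htI : t ∈ Set.Icc (0:ℝ) T := hsubI (Set.Ioo_subset_Icc_self ht)
      have hw' : HasDerivWithinAt w (c t * (1 - (w t / winf) ^ ν)) (Set.Ioo a t₀) t :=
        (hderiv t htI).mono ((Set.Ioo_subset_Icc_self).trans hsubI)
      have h1 : HasDerivWithinAt (fun t => winf - w t) (-(c t * (1 - (w t / winf) ^ ν)))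
          (Set.Ioo a t₀) t := by
        exact ((hasDerivWithinAt_const t (Set.Ioo a t₀) winf).sub hw').congr_deriv (by ring)
      have h2 : HasDerivAt (fun t => Real.exp (K * t)) (Real.exp (K * t) * K) t :=
        (Real.hasDerivAt_exp (K * t)).comp t ((hasDerivAt_id t).const_mul K) |>.congr_deriv
          (by ring)
      have := h1.mul (h2.hasDerivWithinAt)
      exact this.congr_deriv (by ring)
    have hg'nonneg : ∀ t ∈ interior (Set.Icc a t₀),
        0 ≤ (K * (winf - w t) - c t * (1 - (w t / winf) ^ ν)) * Real.exp (K * t) := by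
      intro t ht
      rw [interior_Icc] at ht
      have htIcc : t ∈ Set.Icc a t₀ := Set.Ioo_subset_Icc_self ht
      have htI : t ∈ Set.Icc (0:ℝ) T := hsubI htIcc
      set x : ℝ := w t / winf with hxdef
      have hx1 : 1/2 ≤ x := by
        rw [hxdef, le_div_iff₀ hwinf]
        have := hhalf t htIcc
        linarith
      have hx2 : x ≤ 1 := (div_le_one hwinf).mpr (hle t htIcc)
      have hxν1 : x ^ ν ≤ 1 := Real.rpow_le_one (by linarith) hx2 hν.le
      have hineq : 1 - x ^ ν ≤ 2 * ν * (1 - x) := one_sub_rpow_le_aux ν hν hx1 hx2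
      have hct : c t ≤ C := hC t htI
      have hct0 : 0 ≤ c t := hcpos t htI
      have hmain : c t * (1 - x ^ ν) ≤ C * (2 * ν * (1 - x)) :=
        mul_le_mul hct hineq (by linarith) hC0
      have heq : C * (2 * ν * (1 - x)) = K * (winf - w t) := by
        rw [hKdef, hxdef]
        field_simp
      have : c t * (1 - x ^ ν) ≤ K * (winf - w t) := heq ▸ hmain
      have hexp : 0 ≤ Real.exp (K * t) := (Real.exp_pos _).le
      nlinarith
    have hgcont : ContinuousOn g (Set.Icc a t₀) := by
      apply ContinuousOn.mul
      · exact continuousOn_const.sub (hwc.mono hsubI)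
      · exact (Real.continuous_exp.comp (continuous_const.mul continuous_id)).continuousOn
    have hgmono : MonotoneOn g (Set.Icc a t₀) :=
      monotoneOn_of_hasDerivWithinAt_nonneg (convex_Icc a t₀) hgcont hgderiv hg'nonneg
    have hga : 0 < g a := by
      have hwa : w a < winf := (hbelow a haI halt).2
      exact mul_pos (by linarith) (Real.exp_pos _)
    have hgle : g a ≤ g t₀ :=
      hgmono ⟨le_refl a, halt.le⟩ ⟨halt.le, le_refl t₀⟩ halt.le
    have hgt₀ : g t₀ = 0 := by
      rw [hgdef]
      simp [hw_t₀]
    linarith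
  refine ⟨?_, key⟩
  apply monotoneOn_of_hasDerivWithinAt_nonneg (convex_Icc 0 T) hwc
    (f' := fun t => c t * (1 - (w t / winf) ^ ν))
  · intro t ht
    rw [interior_Icc] at ht ⊢
    exact (hderiv t (Set.Ioo_subset_Icc_self ht)).mono Set.Ioo_subset_Icc_self
  · intro t ht
    rw [interior_Icc] at ht
    have htI : t ∈ Set.Icc (0:ℝ) T := Set.Ioo_subset_Icc_self ht
    obtain ⟨hpos, hlt⟩ := key t htI
    have hx0 : 0 ≤ w t / winf := div_nonneg hpos.le hwinf.le
    have hx1 : w t / winf ≤ 1 := (div_le_one hwinf).mpr hlt.le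
    have h1 := Real.rpow_le_one hx0 hx1 hν.le
    have h2 := hcpos t htI
    nlinarith
end

section
/- Let c₁, c₂ : [0, T] → ℝ be continuous with 0 ≤ c₁(t) ≤ c₂(t) for all t ∈ [0, T], and let w₁, w₂ : [0, T] → ℝ be differentiable with w₁(0) = w₂(0) = w₀ ∈ (0, w_∞) and wᵢ′(t) = cᵢ(t) · (1 − (wᵢ(t)/w_∞)^ν) for i = 1, 2 and all t ∈ [0, T]. Then w₁(t) ≤ w₂(t) for every t ∈ [0, T]. In particular, since γ − γ_F (f(t) − u(t))² ≤ γ for γ_F ≥ 0, any deviation of the feeding strategy u from the biologically optimal rate f can only reduce the weight: the weight under any admissible control is bounded above by the weight under u = f. -/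
/-- Comparison principle for the weight dynamics.  Let `c₁, c₂` be continuous
on `[0, T]` with `0 ≤ c₁(t) ≤ c₂(t)`, and let `w₁, w₂` solve
`wᵢ′(t) = cᵢ(t)(1 - (wᵢ(t)/winf)^ν)` on `[0, T]` with common initial value
`w₁(0) = w₂(0) = w₀ ∈ (0, winf)`.  Then `w₁(t) ≤ w₂(t)` for every `t ∈ [0, T]`.
In particular, since `γ - γF (f(t) - u(t))² ≤ γ` for `γF ≥ 0`, deviating from the
biologically optimal feeding rate can only reduce the weight. -/
theorem weight_comparison_principle
    (winf ν T w₀ : ℝ) (hwinf : 0 < winf) (hν : 0 < ν) (hT : 0 < T)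
    (hw₀ : w₀ ∈ Set.Ioo (0 : ℝ) winf)
    (c₁ c₂ : ℝ → ℝ)
    (hc₁ : ContinuousOn c₁ (Set.Icc (0 : ℝ) T))
    (hc₂ : ContinuousOn c₂ (Set.Icc (0 : ℝ) T))
    (hle : ∀ t ∈ Set.Icc (0 : ℝ) T, 0 ≤ c₁ t ∧ c₁ t ≤ c₂ t)
    (w₁ w₂ : ℝ → ℝ)
    (h10 : w₁ 0 = w₀) (h20 : w₂ 0 = w₀)
    (hd1 : ∀ t ∈ Set.Icc (0 : ℝ) T,
      HasDerivWithinAt w₁ (c₁ t * (1 - (w₁ t / winf) ^ ν)) (Set.Icc (0 : ℝ) T) t)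
    (hd2 : ∀ t ∈ Set.Icc (0 : ℝ) T,
      HasDerivWithinAt w₂ (c₂ t * (1 - (w₂ t / winf) ^ ν)) (Set.Icc (0 : ℝ) T) t) :
    ∀ t ∈ Set.Icc (0 : ℝ) T, w₁ t ≤ w₂ t := by
  obtain ⟨hw₀0, hw₀inf⟩ := hw₀
  have hIco : ∀ x ∈ Set.Ico (0 : ℝ) T, x ∈ Set.Icc (0 : ℝ) T := fun x hx => ⟨hx.1, hx.2.le⟩
  -- right derivatives
  have hd1' : ∀ x ∈ Set.Ico (0 : ℝ) T,
      HasDerivWithinAt w₁ (c₁ x * (1 - (w₁ x / winf) ^ ν)) (Set.Ici x) x := fun x hx =>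
    (hd1 x (hIco x hx)).mono_of_mem_nhdsWithin (Icc_mem_nhdsGE_of_mem hx)
  have hd2' : ∀ x ∈ Set.Ico (0 : ℝ) T,
      HasDerivWithinAt w₂ (c₂ x * (1 - (w₂ x / winf) ^ ν)) (Set.Ici x) x := fun x hx =>
    (hd2 x (hIco x hx)).mono_of_mem_nhdsWithin (Icc_mem_nhdsGE_of_mem hx)
  have hw₁cont : ContinuousOn w₁ (Set.Icc (0 : ℝ) T) := fun x hx =>
    (hd1 x hx).continuousWithinAt
  have hw₂cont : ContinuousOn w₂ (Set.Icc (0 : ℝ) T) := fun x hx =>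
    (hd2 x hx).continuousWithinAt
  have hc₂0 : ∀ x ∈ Set.Icc (0 : ℝ) T, 0 ≤ c₂ x := fun x hx =>
    (hle x hx).1.trans (hle x hx).2
  -- Step 1: upper invariance for w₂ : w₂ t ≤ winf + ε exp t
  have hub : ∀ ε > (0:ℝ), ∀ t ∈ Set.Icc (0:ℝ) T, w₂ t ≤ winf + ε * Real.exp t := by
    intro ε hε t ht
    refine image_le_of_deriv_right_lt_deriv_boundary' (f' := fun x => c₂ x * (1 - (w₂ x / winf) ^ ν))
      (B := fun t => winf + ε * Real.exp t) (B' := fun x => ε * Real.exp x)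
      hw₂cont hd2' ?_ ?_ ?_ ?_ ht
    · show w₂ 0 ≤ winf + ε * Real.exp 0
      rw [h20, Real.exp_zero]
      nlinarith
    · exact continuousOn_const.add (Real.continuous_exp.continuousOn.const_smul ε)
    · intro x _
      exact ((Real.hasDerivAt_exp x).const_mul ε).hasDerivWithinAt.const_add winf
    · intro x hx hcontact
      replace hcontact : w₂ x = winf + ε * Real.exp x := hcontact
      have hgt : 1 < w₂ x / winf := by
        rw [hcontact]
        rw [lt_div_iff₀ hwinf]
        nlinarith [Real.exp_pos x]
      have hpow : 1 < (w₂ x / winf) ^ ν := (Real.one_lt_rpow_iff_of_pos (by linarith)).2 (Or.inl ⟨hgt, hν⟩)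
      have : c₂ x * (1 - (w₂ x / winf) ^ ν) ≤ 0 :=
        mul_nonpos_of_nonneg_of_nonpos (hc₂0 x (hIco x hx)) (by linarith)
      have : (0:ℝ) < ε * Real.exp x := mul_pos hε (Real.exp_pos x)
      linarith
  have hw₂le : ∀ t ∈ Set.Icc (0:ℝ) T, w₂ t ≤ winf := by
    intro t ht
    refine le_of_forall_pos_le_add fun δ hδ => ?_
    have hεpos : 0 < δ / Real.exp T := div_pos hδ (Real.exp_pos T)
    have h1 := hub _ hεpos t ht
    have h2 : δ / Real.exp T * Real.exp t ≤ δ := by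
      rw [div_mul_eq_mul_div, div_le_iff₀ (Real.exp_pos T)]
      have := Real.exp_le_exp.2 ht.2
      nlinarith [Real.exp_pos t]
    linarith
  -- Step 2: lower invariance for w₂ : w₂ t ≥ w₀
  have hlb : ∀ ε > (0:ℝ), ε * Real.exp T < w₀ →
      ∀ t ∈ Set.Icc (0:ℝ) T, w₀ - ε * Real.exp t ≤ w₂ t := by
    intro ε hε hεsmall t ht
    refine image_le_of_deriv_right_lt_deriv_boundary' (f := fun t => w₀ - ε * Real.exp t)
      (f' := fun x => -(ε * Real.exp x))
      (B' := fun x => c₂ x * (1 - (w₂ x / winf) ^ ν))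
      ?_ ?_ ?_ hw₂cont hd2' ?_ ht
    · exact (continuousOn_const.sub (Real.continuous_exp.continuousOn.const_smul ε))
    · intro x _
      exact ((Real.hasDerivAt_exp x).const_mul ε).hasDerivWithinAt.const_sub w₀
    · show w₀ - ε * Real.exp 0 ≤ w₂ 0
      rw [h20, Real.exp_zero]
      nlinarith
    · intro x hx hcontact
      replace hcontact : w₀ - ε * Real.exp x = w₂ x := hcontact
      have hxT : x ∈ Set.Icc (0:ℝ) T := hIco x hx
      have hex : Real.exp x ≤ Real.exp T := Real.exp_le_exp.2 hx.2.le
      have h0 : 0 < w₂ x := by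
        rw [← hcontact]
        nlinarith [Real.exp_pos x]
      have h1 : w₂ x ≤ winf := by
        rw [← hcontact]
        nlinarith [Real.exp_pos x, mul_pos hε (Real.exp_pos x)]
      have hpow : (w₂ x / winf) ^ ν ≤ 1 :=
        Real.rpow_le_one (div_nonneg h0.le hwinf.le) ((div_le_one hwinf).2 h1) hν.le
      have hB0 : 0 ≤ c₂ x * (1 - (w₂ x / winf) ^ ν) :=
        mul_nonneg (hc₂0 x hxT) (by linarith)
      have : (0:ℝ) < ε * Real.exp x := mul_pos hε (Real.exp_pos x)
      linarith
  have hw₂ge : ∀ t ∈ Set.Icc (0:ℝ) T, w₀ ≤ w₂ t := by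
    intro t ht
    refine le_of_forall_pos_le_add fun δ hδ => ?_
    have heT : (0:ℝ) < Real.exp T := Real.exp_pos T
    set ε := min (δ / Real.exp T) (w₀ / (2 * Real.exp T)) with hεdef
    have hεpos : 0 < ε := lt_min (div_pos hδ heT) (div_pos hw₀0 (by linarith))
    have hεsmall : ε * Real.exp T < w₀ := by
      calc ε * Real.exp T ≤ w₀ / (2 * Real.exp T) * Real.exp T :=
            mul_le_mul_of_nonneg_right (min_le_right _ _) heT.le
        _ = w₀ / 2 := by field_simp
        _ < w₀ := by linarith
    have h1 := hlb ε hεpos hεsmall t ht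
    have h2 : ε * Real.exp t ≤ δ := by
      calc ε * Real.exp t ≤ δ / Real.exp T * Real.exp T :=
            mul_le_mul (min_le_left _ _) (Real.exp_le_exp.2 ht.2) (Real.exp_pos t).le
              (div_pos hδ heT).le
        _ = δ := by field_simp
    linarith
  -- Step 3: main comparison with ε-fudge
  have hmain : ∀ ε > (0:ℝ), ∀ t ∈ Set.Icc (0:ℝ) T, w₁ t ≤ w₂ t + ε * Real.exp t := by
    intro ε hε t ht
    refine image_le_of_deriv_right_lt_deriv_boundary'
      (f' := fun x => c₁ x * (1 - (w₁ x / winf) ^ ν))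
      (B := fun t => w₂ t + ε * Real.exp t)
      (B' := fun x => c₂ x * (1 - (w₂ x / winf) ^ ν) + ε * Real.exp x)
      hw₁cont hd1' ?_ ?_ ?_ ?_ ht
    · show w₁ 0 ≤ w₂ 0 + ε * Real.exp 0
      rw [h10, h20, Real.exp_zero]
      nlinarith
    · exact hw₂cont.add (Real.continuous_exp.continuousOn.const_smul ε)
    · intro x hx
      exact (hd2' x hx).add (((Real.hasDerivAt_exp x).const_mul ε).hasDerivWithinAt)
    · intro x hx hcontact
      replace hcontact : w₁ x = w₂ x + ε * Real.exp x := hcontact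
      have hxT : x ∈ Set.Icc (0:ℝ) T := hIco x hx
      have hεe : (0:ℝ) < ε * Real.exp x := mul_pos hε (Real.exp_pos x)
      have h0 : 0 < w₂ x := lt_of_lt_of_le hw₀0 (hw₂ge x hxT)
      have h1 : w₂ x ≤ winf := hw₂le x hxT
      have hg₂ : 0 ≤ 1 - (w₂ x / winf) ^ ν := by
        have := Real.rpow_le_one (div_nonneg h0.le hwinf.le) ((div_le_one hwinf).2 h1) hν.le
        linarith
      have hw12 : w₂ x ≤ w₁ x := by rw [hcontact]; linarith
      rcases le_or_gt (1 - (w₁ x / winf) ^ ν) 0 with hg₁ | hg₁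
      · have hA : c₁ x * (1 - (w₁ x / winf) ^ ν) ≤ 0 :=
          mul_nonpos_of_nonneg_of_nonpos (hle x hxT).1 hg₁
        have hB : 0 ≤ c₂ x * (1 - (w₂ x / winf) ^ ν) := mul_nonneg (hc₂0 x hxT) hg₂
        linarith
      · have hdiv : w₂ x / winf ≤ w₁ x / winf := by gcongr
        have hmono : (w₂ x / winf) ^ ν ≤ (w₁ x / winf) ^ ν :=
          Real.rpow_le_rpow (div_nonneg h0.le hwinf.le) hdiv hν.le
        have hA : c₁ x * (1 - (w₁ x / winf) ^ ν) ≤ c₂ x * (1 - (w₁ x / winf) ^ ν) :=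
            mul_le_mul_of_nonneg_right (hle x hxT).2 hg₁.le
        have hB : c₂ x * (1 - (w₁ x / winf) ^ ν) ≤ c₂ x * (1 - (w₂ x / winf) ^ ν) :=
            mul_le_mul_of_nonneg_left (by linarith) (hc₂0 x hxT)
        linarith
  -- Step 4: let ε → 0
  intro t ht
  refine le_of_forall_pos_le_add fun δ hδ => ?_
  have heT : (0:ℝ) < Real.exp T := Real.exp_pos T
  have hεpos : 0 < δ / Real.exp T := div_pos hδ heT
  have h1 := hmain _ hεpos t ht
  have h2 : δ / Real.exp T * Real.exp t ≤ δ := by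
    rw [div_mul_eq_mul_div, div_le_iff₀ heT]
    have := Real.exp_le_exp.2 ht.2
    nlinarith [Real.exp_pos t]
  linarith
end
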